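/- Any subset A of {1,3}^4 such that no two elements of A have Hamming distance exactly 2 has cardinality at most 4; moreover if |A| = 4 then A is the union of two antipodal pairs, one consisting of words with an even number of 1's and one with an odd number of 1's. -/
import Mathlib


/-- The number of 1's in a word of `{1,3}^4` (modeled as `Fin 4 → Fin 2`, with `0`
standing for the letter `1` and `1` for the letter `3`). -/
def numOnes (x : Fin 4 → Fin 2) : ℕ :=
  (Finset.univ.filter fun j => x j = 0).card

/-- The antipode of a word, flipping every coordinate. -/
def antipode (x : Fin 4 → Fin 2) : Fin 4 → Fin 2 :=
  fun j => x j + 1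

/-- Two distinct words of the same parity are at distance 2 unless antipodal. -/
lemma dist_two_or_antipode : ∀ x y : Fin 4 → Fin 2, x ≠ y →
    (Even (numOnes x) ↔ Even (numOnes y)) →
    hammingDist x y = 2 ∨ y = antipode x := by decide

lemma parity_class_structure (A : Finset (Fin 4 → Fin 2))
    (h : ∀ x ∈ A, ∀ y ∈ A, hammingDist x y ≠ 2)
    (hpar : ∀ x ∈ A, ∀ y ∈ A, (Even (numOnes x) ↔ Even (numOnes y))) :
    A.card ≤ 2 ∧ (A.card = 2 → ∃ x ∈ A, A = {x, antipode x}) := by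
  have key : ∀ x ∈ A, ∀ y ∈ A, x ≠ y → y = antipode x := by
    intro x hx y hy hxy
    rcases dist_two_or_antipode x y hxy (hpar x hx y hy) with h2 | h2
    · exact absurd h2 (h x hx y hy)
    · exact h2
  constructor
  · by_contra hc
    push_neg at hc
    obtain ⟨a, b, c, ha, hb, hc', hab, hac, hbc⟩ := Finset.two_lt_card_iff.mp hc
    have h1 := key a ha b hb hab
    have h2 := key a ha c hc' hac
    exact hbc (h1.trans h2.symm)
  · intro h2
    obtain ⟨a, b, hab, hA⟩ := Finset.card_eq_two.mp h2
    have ha : a ∈ A := by rw [hA]; simp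
    have hb : b ∈ A := by rw [hA]; simp
    refine ⟨a, ha, ?_⟩
    rw [hA, key a ha b hb hab]

/-- A subset of `{1,3}^4` with no two elements at Hamming distance exactly 2 has at most
4 elements; if it has exactly 4, it is the union of two antipodal pairs, one of even
parity and one of odd parity (of the number of 1's). -/
theorem no_distance_two_structure (A : Finset (Fin 4 → Fin 2))
    (h : ∀ x ∈ A, ∀ y ∈ A, hammingDist x y ≠ 2) :
    A.card ≤ 4 ∧
      (A.card = 4 → ∃ x y : Fin 4 → Fin 2,
        Even (numOnes x) ∧ ¬ Even (numOnes y) ∧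
        A = {x, antipode x, y, antipode y}) := by
  classical
  set E := A.filter (fun x => Even (numOnes x)) with hE
  set O := A.filter (fun x => ¬ Even (numOnes x)) with hO
  have hEsub : E ⊆ A := Finset.filter_subset _ _
  have hOsub : O ⊆ A := Finset.filter_subset _ _
  have hEstr := parity_class_structure E
    (fun x hx y hy => h x (hEsub hx) y (hEsub hy))
    (by intro x hx y hy
        rw [hE, Finset.mem_filter] at hx hy
        exact ⟨fun _ => hy.2, fun _ => hx.2⟩)
  have hOstr := parity_class_structure O
    (fun x hx y hy => h x (hOsub hx) y (hOsub hy))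
    (by intro x hx y hy
        rw [hO, Finset.mem_filter] at hx hy
        exact ⟨fun hh => absurd hh hx.2, fun hh => absurd hh hy.2⟩)
  have hcard : E.card + O.card = A.card := Finset.card_filter_add_card_filter_not _
  have hunion : E ∪ O = A := Finset.filter_union_filter_not_eq _ _
  constructor
  · omega
  · intro h4
    have hE2 : E.card = 2 := by omega
    have hO2 : O.card = 2 := by omega
    obtain ⟨x, hx, hEeq⟩ := hEstr.2 hE2
    obtain ⟨y, hy, hOeq⟩ := hOstr.2 hO2
    rw [hE, Finset.mem_filter] at hx
    rw [hO, Finset.mem_filter] at hy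
    refine ⟨x, y, hx.2, hy.2, ?_⟩
    rw [← hunion, hEeq, hOeq]
    ext z
    simp only [Finset.mem_union, Finset.mem_insert, Finset.mem_singleton]
    tauto
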